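/- Let F be a filter of the Ignatiev semilattice (I, ∧) (a nonempty upward-closed subset closed under meets, where the order is α ≤ β iff αₙ ≥ βₙ for all n). Let Fᵢ = {αᵢ : α ∈ F} be its i-th projection. Then: (1) each Fᵢ is nonempty; (2) each Fᵢ is downward closed in the ordinals; (3) if α ∈ Fᵢ, β ∈ F_{i+1}, and ℓ(α) < β, then α + ω^β ∈ Fᵢ. -/

import Mathlib

/-!
For `z ≠ 0`, `ω ^ y ∣ z ↔ y ≤ ℓ z`, so the least ordinal `≥ x` whose last Cantor exponent is
`≥ y` is `x` itself if `y ≤ ℓ x` and `x + ω ^ y` otherwise. Rounding up in this way backwards from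
the last nonzero coordinate computes the meet of two finitely supported elements of `I`.

Projections of `F` are downward closed because lowering the `i`-th coordinate of `α ∈ F` and
zeroing the later ones stays in `I` below `α`. For (3), cut `α` off after `i` and `β` after `i + 1`;
their meet `γ` lies in `F`, has `γ (i + 1) = β (i + 1)` and `γ i ≥ α i`, and since
`β (i + 1) ≤ ℓ (γ i)` the rounding bound gives `α i + ω ^ β (i + 1) ≤ γ i`.
-/

open Ordinal

/-- `ell β` is the exponent of the last (smallest) term of the Cantor normal
form of `β` (base ω), with `ell 0 = 0`. -/
noncomputable def ell (b : Ordinal) : Ordinal :=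
  ((Ordinal.CNF omega0 b).map Prod.fst).getLastD 0

/-- `ε₀`, the least ordinal `α` with `ω ^ α = α`. -/
noncomputable def eps0 : Ordinal := Ordinal.nfp (fun a => omega0 ^ a) 0

/-- Membership in the Ignatiev set `I`: sequences of ordinals below `ε₀` with
`α (i+1) ≤ ℓ (α i)` for all `i`. -/
def IgMem (a : ℕ → Ordinal) : Prop :=
  (∀ i, a i < eps0) ∧ ∀ i, a (i + 1) ≤ ell (a i)

theorem ell_zero : ell 0 = 0 := by simp [ell]

theorem ell_eq_of_ne_zero {z : Ordinal} (hz : z ≠ 0) :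
    ell z = if z % ω ^ log ω z = 0 then log ω z else ell (z % ω ^ log ω z) := by
  have hCNF : CNF ω (z % ω ^ log ω z) = [] ↔ z % ω ^ log ω z = 0 := by
    refine ⟨fun h => ?_, fun h => by rw [h, CNF.zero_right]⟩
    simpa [h] using (CNF.foldr ω (z % ω ^ log ω z)).symm
  unfold ell
  rw [CNF.ne_zero hz, List.map_cons]
  split_ifs with h
  · simp [hCNF.2 h]
  · rw [List.getLastD_cons, List.getLastD_eq_getLast?, List.getLastD_eq_getLast?,
      List.getLast?_eq_some_getLast (by simpa using mt hCNF.1 h)]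
    simp

theorem le_log_of_opow_dvd {y z : Ordinal} (hz : z ≠ 0) (h : ω ^ y ∣ z) : y ≤ log ω z :=
  le_log_of_opow_le one_lt_omega0 (le_of_dvd hz h)

theorem omega0_opow_dvd_iff_le_ell {z : Ordinal} (hz : z ≠ 0) (y : Ordinal) :
    ω ^ y ∣ z ↔ y ≤ ell z := by
  induction z using CNF.rec ω generalizing y with
  | H0 => exact absurd rfl hz
  | H z hz IH =>
    set L := log ω z
    set r := z % ω ^ L
    have hdvd_iff : y ≤ L → (ω ^ y ∣ z ↔ ω ^ y ∣ r) := fun hy => by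
      conv_lhs => rw [← div_add_mod z (ω ^ L)]
      exact dvd_add_iff (dvd_mul_of_dvd_left (opow_dvd_opow ω hy) _)
    rw [ell_eq_of_ne_zero hz]
    split_ifs with hr
    · exact ⟨le_log_of_opow_dvd hz,
        fun hy => (opow_dvd_opow ω hy).trans (dvd_iff_mod_eq_zero.2 hr)⟩
    · rw [← IH hr]
      refine ⟨fun h => (hdvd_iff (le_log_of_opow_dvd hz h)).1 h, fun h => ?_⟩
      have hyL : y < L := (opow_lt_opow_iff_right one_lt_omega0).1
        ((le_of_dvd hr h).trans_lt (mod_lt z (opow_ne_zero L omega0_ne_zero)))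
      exact (hdvd_iff hyL.le).2 h

theorem add_omega0_opow_eq_mul (x y : Ordinal) : x + ω ^ y = ω ^ y * (x / ω ^ y + 1) := by
  conv_lhs => rw [← div_add_mod x (ω ^ y)]
  rw [mul_add_one, add_assoc,
    add_omega0_opow (mod_lt x (opow_ne_zero y omega0_ne_zero))]

theorem le_ell_add_omega0_opow (x y : Ordinal) : y ≤ ell (x + ω ^ y) := by
  have hne : x + ω ^ y ≠ 0 := (add_pos_of_nonneg_of_pos zero_le (opow_pos y omega0_pos)).ne'
  exact (omega0_opow_dvd_iff_le_ell hne y).1 ⟨_, add_omega0_opow_eq_mul x y⟩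

theorem add_omega0_opow_le_of_dvd {x y z : Ordinal} (hz : ω ^ y ∣ z) (hxz : x < z) :
    x + ω ^ y ≤ z := by
  obtain ⟨q, rfl⟩ := hz
  rw [add_omega0_opow_eq_mul]
  refine mul_le_mul_right (Order.add_one_le_of_lt ?_) _
  exact lt_of_mul_lt_mul_left ((mul_div_le x _).trans_lt hxz) zero_le

open Classical in
noncomputable def roundUp (x y : Ordinal) : Ordinal :=
  if y ≤ ell x then x else x + ω ^ y

theorem le_roundUp (x y : Ordinal) : x ≤ roundUp x y := by
  unfold roundUp; split_ifs
  exacts [le_rfl, le_self_add]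

theorem le_ell_roundUp (x y : Ordinal) : y ≤ ell (roundUp x y) := by
  unfold roundUp; split_ifs with h
  exacts [h, le_ell_add_omega0_opow x y]

theorem roundUp_le {x y z : Ordinal} (hxz : x ≤ z) (hyz : y ≤ ell z) : roundUp x y ≤ z := by
  unfold roundUp; split_ifs with hyx
  · exact hxz
  · have hz : z ≠ 0 := by
      rintro rfl
      rw [ell_zero, nonpos_iff_eq_zero] at hyz
      exact hyx (hyz ▸ zero_le)
    have hlt : x < z := hxz.lt_of_ne (by rintro rfl; exact hyx hyz)
    exact add_omega0_opow_le_of_dvd ((omega0_opow_dvd_iff_le_ell hz y).2 hyz) hlt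

theorem roundUp_of_ell_lt {x y : Ordinal} (h : ell x < y) : roundUp x y = x + ω ^ y :=
  if_neg h.not_ge

theorem eps0_eq_epsilon_zero : eps0 = ε₀ := epsilon_zero_eq_nfp.symm

theorem roundUp_lt_eps0 {x y : Ordinal} (hx : x < eps0) (hy : y < eps0) : roundUp x y < eps0 := by
  rw [eps0_eq_epsilon_zero] at *
  unfold roundUp; split_ifs
  · exact hx
  · rw [← omega0_opow_epsilon] at hx ⊢
    exact isPrincipal_add_omega0_opow _ hx ((opow_lt_opow_iff_right one_lt_omega0).2 hy)

noncomputable def igHull (M : ℕ → Ordinal) (N n : ℕ) : Ordinal :=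
  if n < N then roundUp (M n) (igHull M N (n + 1)) else M n
termination_by N - n

section igHull

variable {M : ℕ → Ordinal} {N n : ℕ}

theorem igHull_of_lt (h : n < N) : igHull M N n = roundUp (M n) (igHull M N (n + 1)) := by
  rw [igHull, if_pos h]

theorem igHull_of_le (h : N ≤ n) : igHull M N n = M n := by
  rw [igHull, if_neg h.not_gt]

theorem le_igHull : M n ≤ igHull M N n := by
  rcases lt_or_ge n N with h | h
  · exact (igHull_of_lt h).symm ▸ le_roundUp _ _
  · exact (igHull_of_le h).ge

theorem igHull_lt_eps0 (hM : ∀ n, M n < eps0) (n : ℕ) : igHull M N n < eps0 := by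
  rcases lt_or_ge n N with h | h
  · rw [igHull_of_lt h]
    exact roundUp_lt_eps0 (hM n) (igHull_lt_eps0 hM (n + 1))
  · rw [igHull_of_le h]
    exact hM n
termination_by N - n

theorem igMem_igHull (hM : ∀ n, M n < eps0) (hN : ∀ n, N < n → M n = 0) :
    IgMem (igHull M N) := by
  refine ⟨igHull_lt_eps0 hM, fun n => ?_⟩
  rcases lt_or_ge n N with h | h
  · rw [igHull_of_lt h]
    exact le_ell_roundUp _ _
  · rw [igHull_of_le (h.trans n.le_succ), hN (n + 1) (Nat.lt_succ_of_le h)]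
    exact zero_le

theorem igHull_le {d : ℕ → Ordinal} (hd : IgMem d) (hMd : ∀ n, M n ≤ d n) (n : ℕ) :
    igHull M N n ≤ d n := by
  rcases lt_or_ge n N with h | h
  · rw [igHull_of_lt h]
    exact roundUp_le (hMd n) ((igHull_le hd hMd (n + 1)).trans (hd.2 n))
  · rw [igHull_of_le h]
    exact hMd n
termination_by N - n

end igHull

def cutoff (a : ℕ → Ordinal) (N n : ℕ) : Ordinal :=
  if n ≤ N then a n else 0

theorem cutoff_of_le {a : ℕ → Ordinal} {N n : ℕ} (h : n ≤ N) : cutoff a N n = a n := if_pos h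

theorem cutoff_of_lt {a : ℕ → Ordinal} {N n : ℕ} (h : N < n) : cutoff a N n = 0 :=
  if_neg h.not_ge

theorem cutoff_le (a : ℕ → Ordinal) (N n : ℕ) : cutoff a N n ≤ a n := by
  unfold cutoff; split_ifs
  exacts [le_rfl, zero_le]

theorem IgMem.of_le {a b : ℕ → Ordinal} (ha : IgMem a) (hba : ∀ n, b n ≤ a n)
    (h : ∀ n, b n = a n ∨ b (n + 1) = 0) : IgMem b := by
  refine ⟨fun n => (hba n).trans_lt (ha.1 n), fun n => ?_⟩
  rcases h n with hn | hn
  · exact hn ▸ (hba (n + 1)).trans (ha.2 n)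
  · exact hn ▸ zero_le

theorem IgMem.cutoff {a : ℕ → Ordinal} (ha : IgMem a) (N : ℕ) : IgMem (cutoff a N) := by
  refine ha.of_le (cutoff_le a N) fun n => ?_
  rcases le_or_gt n N with h | h
  · exact .inl (cutoff_of_le h)
  · exact .inr (cutoff_of_lt (h.trans n.lt_succ_self))

def IsIgMeet (a b c : ℕ → Ordinal) : Prop :=
  IgMem c ∧ (∀ n, max (a n) (b n) ≤ c n) ∧
    ∀ d : ℕ → Ordinal, IgMem d → (∀ n, max (a n) (b n) ≤ d n) → ∀ n, c n ≤ d n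

def IsIgUpperSet (F : Set (ℕ → Ordinal)) : Prop :=
  ∀ a ∈ F, ∀ b : ℕ → Ordinal, IgMem b → (∀ n, b n ≤ a n) → b ∈ F

def IsIgMeetClosed (F : Set (ℕ → Ordinal)) : Prop :=
  ∀ a ∈ F, ∀ b ∈ F, ∀ c : ℕ → Ordinal, IsIgMeet a b c → c ∈ F

theorem isIgMeet_igHull {a b : ℕ → Ordinal} {N : ℕ} (ha : IgMem a) (hb : IgMem b)
    (hN : ∀ n, N < n → a n = 0 ∧ b n = 0) :
    IsIgMeet a b (igHull (fun n => max (a n) (b n)) N) := by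
  refine ⟨igMem_igHull (fun n => max_lt (ha.1 n) (hb.1 n)) fun n hn => ?_,
    fun n => le_igHull, fun d hd hMd => igHull_le hd hMd⟩
  rw [(hN n hn).1, (hN n hn).2, max_self]

theorem IsIgUpperSet.exists_apply_eq {F : Set (ℕ → Ordinal)} (hF : IsIgUpperSet F)
    {a : ℕ → Ordinal} (haF : a ∈ F) (ha : IgMem a) {i : ℕ} {y : Ordinal} (hy : y ≤ a i) :
    ∃ b ∈ F, b i = y := by
  set b := Function.update (cutoff a i) i y
  have hba : ∀ n, b n ≤ a n := fun n => by
    rcases eq_or_ne n i with rfl | hn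
    · simpa [b] using hy
    · simpa [b, hn] using cutoff_le a i n
  have hb : IgMem b := ha.of_le hba fun n => by
    rcases lt_or_ge n i with hn | hn
    · exact .inl (by simp [b, hn.ne, cutoff_of_le hn.le])
    · exact .inr (by simp [b, (Nat.lt_succ_of_le hn).ne', cutoff_of_lt (Nat.lt_succ_of_le hn)])
  exact ⟨b, hF a haF b hb hba, by simp [b]⟩

theorem exists_le_apply_add_omega0_opow {F : Set (ℕ → Ordinal)} (hsub : ∀ a ∈ F, IgMem a)
    (hup : IsIgUpperSet F) (hmeet : IsIgMeetClosed F) {a b : ℕ → Ordinal} (ha : a ∈ F)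
    (hb : b ∈ F) {i : ℕ} (hab : ell (a i) < b (i + 1)) :
    ∃ c ∈ F, a i + ω ^ b (i + 1) ≤ c i := by
  have ha' : cutoff a i ∈ F := hup a ha _ ((hsub a ha).cutoff i) (cutoff_le a i)
  have hb' : cutoff b (i + 1) ∈ F := hup b hb _ ((hsub b hb).cutoff (i + 1)) (cutoff_le b (i + 1))
  set c := igHull (fun n => max (cutoff a i n) (cutoff b (i + 1) n)) (i + 1)
  have hc : IsIgMeet (cutoff a i) (cutoff b (i + 1)) c :=
    isIgMeet_igHull ((hsub a ha).cutoff i) ((hsub b hb).cutoff (i + 1)) fun n hn =>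
      ⟨cutoff_of_lt (Nat.lt_of_succ_lt hn), cutoff_of_lt hn⟩
  have hac : a i ≤ c i := calc
    a i = cutoff a i i := (cutoff_of_le le_rfl).symm
    _ ≤ c i := (le_max_left _ _).trans le_igHull
  have hbc : b (i + 1) ≤ ell (c i) := calc
    b (i + 1) = c (i + 1) := by
      simp only [c]
      rw [igHull_of_le le_rfl, cutoff_of_lt i.lt_succ_self, cutoff_of_le le_rfl,
        max_eq_right zero_le]
    _ ≤ ell (c i) := hc.1.2 i
  exact ⟨c, hmeet _ ha' _ hb' c hc, roundUp_of_ell_lt hab ▸ roundUp_le hac hbc⟩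


/-- Projections of a filter of the Ignatiev semilattice: each projection is
nonempty, downward closed, and satisfies the closure condition (3). -/
theorem stmt_14 (F : Set (ℕ → Ordinal))
    (hsub : ∀ a ∈ F, IgMem a)
    (hne : F.Nonempty)
    (hup : ∀ a ∈ F, ∀ b : ℕ → Ordinal, IgMem b → (∀ n, b n ≤ a n) → b ∈ F)
    (hmeet : ∀ a ∈ F, ∀ b ∈ F, ∀ c : ℕ → Ordinal,
      (IgMem c ∧ (∀ n, max (a n) (b n) ≤ c n) ∧
        ∀ d : ℕ → Ordinal, IgMem d → (∀ n, max (a n) (b n) ≤ d n) →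
          ∀ n, c n ≤ d n) → c ∈ F) :
    (∀ i : ℕ, ∃ x : Ordinal, ∃ a ∈ F, a i = x) ∧
    (∀ i : ℕ, ∀ x y : Ordinal, (∃ a ∈ F, a i = x) → y ≤ x → ∃ a ∈ F, a i = y) ∧
    (∀ i : ℕ, ∀ x y : Ordinal, (∃ a ∈ F, a i = x) → (∃ a ∈ F, a (i + 1) = y) →
      ell x < y → ∃ a ∈ F, a i = x + omega0 ^ y) := by
  have hup : IsIgUpperSet F := hup
  refine ⟨fun i => ?_, ?_, ?_⟩
  · obtain ⟨a, ha⟩ := hne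
    exact ⟨a i, a, ha, rfl⟩
  · rintro i x y ⟨a, ha, rfl⟩ hy
    exact hup.exists_apply_eq ha (hsub a ha) hy
  · rintro i x y ⟨a, ha, rfl⟩ ⟨b, hb, rfl⟩ hab
    obtain ⟨c, hc, hle⟩ := exists_le_apply_add_omega0_opow hsub hup hmeet ha hb hab
    exact hup.exists_apply_eq hc (hsub c hc) hle
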